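/- arXiv:1212.4613 — 8 statements merged into one kernel-verified Lean document; each statement's English description precedes it below -/
import Mathlib

section
/- Let S[1..n] end with a unique terminator. Define the sequential construction: start with a trie containing only the root; for i = 1 to n, insert a new node whose path label is the shortest prefix of S[i..n] that is not already a path label in the current trie, and label it i. Then this insertion is always well-defined (such a shortest absent prefix always exists) and the resulting trie is a position heap for S. -/
/-- One step of the sequential construction: insert the shortest prefix of
`S.drop i` (the suffix starting at position `i + 1`, 1-indexed) that is absent
from the current trie `N`.  `List.inits` lists prefixes in increasing length,
so `find?` returns the shortest absent one. -/
def posHeapStep {α : Type} [DecidableEq α]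
    (S : List α) (N : Finset (List α)) (i : ℕ) : Finset (List α) :=
  match ((S.drop i).inits).find? (fun p => decide (p ∉ N)) with
  | some p => insert p N
  | none => N

/-- The trie after processing positions `1, ..., i` (starting from the root). -/
def posHeapBuild {α : Type} [DecidableEq α] (S : List α) : ℕ → Finset (List α)
  | 0 => {([] : List α)}
  | i + 1 => posHeapStep S (posHeapBuild S i) i

/-!
Each step inserts a node whose proper prefixes are already present, so the trie stays
prefix-closed. Label a node by the first step at which it is present. A step can fail only if
the whole suffix `S[i..n]` is already a node; that node would have been inserted at an earlier
step `j < i` as a prefix of `S[j..n]`, which the unique terminator rules out. So step `i`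
inserts exactly one new node, which gives the bijection onto `{0, ..., n}`, and prefix closure
at the step where the longer node appears gives the monotonicity of the labels.
-/

namespace List

variable {α : Type*}

theorem find?_inits_eq_false_of_prefix {L p q : List α} {f : List α → Bool}
    (h : L.inits.find? f = some p) (hqp : q <+: p) (hne : q ≠ p) : f q = false := by
  obtain ⟨-, i, hi, hip, hmin⟩ := find?_eq_some_iff_getElem.mp h
  have hpL : p <+: L := (mem_inits _ _).mp (mem_of_find?_eq_some h)
  have hpi : p = L.take i := by rw [← hip, getElem_inits]
  have hqi : q.length < i :=
    calc q.length < p.length := lt_of_le_of_ne hqp.length_le (mt hqp.eq_of_length hne)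
      _ ≤ i := by rw [hpi, length_take]; exact min_le_left _ _
  have hqL : q.length < L.inits.length := by
    simpa [Nat.lt_succ_iff] using (hqp.trans hpL).length_le
  have hq : L.inits[q.length] = q := by
    rw [getElem_inits]
    exact (prefix_iff_eq_take.mp (hqp.trans hpL)).symm
  simpa [hq] using hmin q.length hqi

theorem drop_not_prefix_drop_of_not_mem {T : List α} {c : α} (hc : c ∉ T) {i j : ℕ}
    (hji : j < i) (hi : i ≤ T.length) : ¬ (T ++ [c]).drop i <+: (T ++ [c]).drop j := by
  intro hpre
  rw [drop_append_of_le_length hi, drop_append_of_le_length (by omega)] at hpre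
  have hlen : (T.drop i ++ [c]).length ≤ (T.drop j).length := by simp; omega
  have hpreT : T.drop i ++ [c] <+: T.drop j :=
    prefix_of_prefix_length_le hpre (prefix_append _ _) hlen
  exact hc (mem_of_mem_drop (hpreT.subset (by simp)))

theorem exists_find?_inits_not_mem [DecidableEq α] {L : List α} {N : Finset (List α)}
    (hL : L ∉ N) : ∃ p, L.inits.find? (fun p => decide (p ∉ N)) = some p :=
  Option.isSome_iff_exists.mp
    (find?_isSome.mpr ⟨L, (mem_inits _ _).mpr (prefix_refl _), by simpa⟩)

end List

section PositionHeap

variable {α : Type} [DecidableEq α] {S : List α} {N : Finset (List α)} {i : ℕ} {p q : List α}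

theorem posHeapStep_eq_insert
    (h : ((S.drop i).inits).find? (fun p => decide (p ∉ N)) = some p) :
    posHeapStep S N i = insert p N := by
  rw [posHeapStep, h]

theorem posHeapStep_prefix_closed (hN : ∀ p ∈ N, ∀ q, q <+: p → q ∈ N) :
    ∀ p ∈ posHeapStep S N i, ∀ q, q <+: p → q ∈ posHeapStep S N i := by
  unfold posHeapStep
  cases hf : ((S.drop i).inits).find? (fun p => decide (p ∉ N)) with
  | none => exact hN
  | some r =>
    intro p hp q hqp
    rcases Finset.mem_insert.mp hp with rfl | hpN
    · by_cases hqr : q = p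
      · exact hqr ▸ Finset.mem_insert_self _ _
      · have hqN := List.find?_inits_eq_false_of_prefix hf hqp hqr
        simp only [decide_eq_false_iff_not, not_not] at hqN
        exact Finset.mem_insert_of_mem hqN
    · exact Finset.mem_insert_of_mem (hN p hpN q hqp)

theorem posHeapBuild_mono (S : List α) : Monotone (posHeapBuild S) := by
  refine monotone_nat_of_le_succ fun i => ?_
  rw [posHeapBuild, posHeapStep]
  split
  · exact Finset.subset_insert _ _
  · exact subset_rfl

theorem posHeapBuild_prefix_closed (S : List α) (i : ℕ) :
    ∀ p ∈ posHeapBuild S i, ∀ q, q <+: p → q ∈ posHeapBuild S i := by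
  induction i with
  | zero =>
    intro p hp q hqp
    rw [posHeapBuild, Finset.mem_singleton] at hp ⊢
    exact List.prefix_nil.mp (hp ▸ hqp)
  | succ i ih => exact posHeapStep_prefix_closed ih

theorem find?_eq_some_of_mem_posHeapBuild_succ (hp : p ∈ posHeapBuild S (i + 1))
    (hpi : p ∉ posHeapBuild S i) :
    ((S.drop i).inits).find? (fun p => decide (p ∉ posHeapBuild S i)) = some p := by
  rw [posHeapBuild, posHeapStep] at hp
  split at hp
  · next r hf =>
    rcases Finset.mem_insert.mp hp with rfl | hp'
    · exact hf
    · exact absurd hp' hpi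
  · exact absurd hp hpi

-- Also `0` for lists that never appear, since `sInf ∅ = 0`.
noncomputable def posHeapLabel (S : List α) (p : List α) : ℕ :=
  sInf {k | p ∈ posHeapBuild S k}

theorem posHeapLabel_nil : posHeapLabel S [] = 0 :=
  Nat.sInf_eq_zero.mpr (Or.inl (by simp [posHeapBuild]))

theorem posHeapLabel_le (hp : p ∈ posHeapBuild S i) : posHeapLabel S p ≤ i :=
  Nat.sInf_le hp

theorem mem_posHeapBuild_posHeapLabel (hp : p ∈ posHeapBuild S i) :
    p ∈ posHeapBuild S (posHeapLabel S p) :=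
  Nat.sInf_mem (s := {k | p ∈ posHeapBuild S k}) ⟨i, hp⟩

theorem posHeapLabel_eq_succ_iff :
    posHeapLabel S p = i + 1 ↔ p ∈ posHeapBuild S (i + 1) ∧ p ∉ posHeapBuild S i :=
  Nat.sInf_upward_closed_eq_succ_iff (fun _ _ hk hp => posHeapBuild_mono S hk hp) i

theorem eq_nil_of_posHeapLabel_eq_zero (hp : p ∈ posHeapBuild S i)
    (h : posHeapLabel S p = 0) : p = [] := by
  simpa [h, posHeapBuild] using mem_posHeapBuild_posHeapLabel hp

theorem posHeapLabel_of_find?_eq_some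
    (h : ((S.drop i).inits).find? (fun p => decide (p ∉ posHeapBuild S i)) = some p) :
    posHeapLabel S p = i + 1 := by
  refine posHeapLabel_eq_succ_iff.mpr ⟨?_, ?_⟩
  · rw [posHeapBuild, posHeapStep_eq_insert h]
    exact Finset.mem_insert_self _ _
  · simpa using List.find?_some h

theorem find?_eq_some_of_posHeapLabel_eq_succ (h : posHeapLabel S p = i + 1) :
    ((S.drop i).inits).find? (fun p => decide (p ∉ posHeapBuild S i)) = some p :=
  find?_eq_some_of_mem_posHeapBuild_succ (posHeapLabel_eq_succ_iff.mp h).1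
    (posHeapLabel_eq_succ_iff.mp h).2

theorem posHeapLabel_injOn : Set.InjOn (posHeapLabel S) ↑(posHeapBuild S i) := by
  intro p hp q hq hpq
  cases h : posHeapLabel S p with
  | zero => rw [eq_nil_of_posHeapLabel_eq_zero hp h, eq_nil_of_posHeapLabel_eq_zero hq (hpq ▸ h)]
  | succ j =>
    have hfp := find?_eq_some_of_posHeapLabel_eq_succ h
    rw [find?_eq_some_of_posHeapLabel_eq_succ (hpq ▸ h)] at hfp
    exact (Option.some_injective _ hfp).symm

theorem posHeapLabel_le_of_prefix (hq : q ∈ posHeapBuild S i) (hpq : p <+: q) :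
    posHeapLabel S p ≤ posHeapLabel S q :=
  posHeapLabel_le (posHeapBuild_prefix_closed S _ q (mem_posHeapBuild_posHeapLabel hq) p hpq)

theorem prefix_drop_posHeapLabel_sub_one (h : 1 ≤ posHeapLabel S p) :
    p <+: S.drop (posHeapLabel S p - 1) := by
  obtain ⟨j, hj⟩ := Nat.exists_eq_add_of_le' h
  rw [hj, Nat.add_sub_cancel]
  exact (List.mem_inits _ _).mp (List.mem_of_find?_eq_some
    (find?_eq_some_of_posHeapLabel_eq_succ hj))

theorem posHeapLabel_bijOn {n : ℕ} (hfresh : ∀ i < n, S.drop i ∉ posHeapBuild S i) :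
    Set.BijOn (posHeapLabel S) ↑(posHeapBuild S n) (Set.Iic n) := by
  refine ⟨fun p hp => posHeapLabel_le hp, posHeapLabel_injOn, ?_⟩
  rintro (_ | j) hj
  · exact ⟨[], posHeapBuild_mono S (Nat.zero_le n) (by simp [posHeapBuild]), posHeapLabel_nil⟩
  · obtain ⟨p, hp⟩ := List.exists_find?_inits_not_mem (hfresh j hj)
    have hlab := posHeapLabel_of_find?_eq_some hp
    exact ⟨p, posHeapBuild_mono S hj (posHeapLabel_eq_succ_iff.mp hlab).1, hlab⟩

theorem drop_not_mem_posHeapBuild {T : List α} {c : α} (hc : c ∉ T) (hi : i ≤ T.length) :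
    (T ++ [c]).drop i ∉ posHeapBuild (T ++ [c]) i := by
  intro hmem
  cases h : posHeapLabel (T ++ [c]) ((T ++ [c]).drop i) with
  | zero =>
    have := congrArg List.length (eq_nil_of_posHeapLabel_eq_zero hmem h)
    simp only [List.length_drop, List.length_append, List.length_singleton,
      List.length_nil] at this
    omega
  | succ j =>
    have hji : j + 1 ≤ i := h ▸ posHeapLabel_le hmem
    have hpre := prefix_drop_posHeapLabel_sub_one (h ▸ Nat.le_add_left 1 j)
    rw [h, Nat.add_sub_cancel] at hpre
    exact List.drop_not_prefix_drop_of_not_mem hc hji hi hpre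

end PositionHeap

/-- For `S` ending with a unique terminator, the sequential
construction is always well-defined (at every step a shortest absent prefix of
the current suffix exists), and the resulting trie, with the node inserted at
step `i` labelled `i`, is a position heap for `S`: it is prefix-closed, the
labelling is a bijection onto `{0, ..., n}` with the root labelled `0`, labels
increase from parents to children, and the path label of the node labelled `i`
is a prefix of `S[i..n]`. -/
theorem posHeapBuild_welldefined_and_isPositionHeap
    {α : Type} [DecidableEq α]
    (S T : List α) (c : α) (hS : S = T ++ [c]) (hc : c ∉ T) :
    (∀ i < S.length, ∃ p : List α,
        ((S.drop i).inits).find? (fun p => decide (p ∉ posHeapBuild S i)) = some p) ∧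
    ∃ lab : List α → ℕ,
      lab [] = 0 ∧
      (∀ i < S.length, ∀ p : List α,
        ((S.drop i).inits).find? (fun p => decide (p ∉ posHeapBuild S i)) = some p →
          lab p = i + 1) ∧
      (∀ p ∈ posHeapBuild S S.length, ∀ q : List α, q <+: p → q ∈ posHeapBuild S S.length) ∧
      Set.BijOn lab ↑(posHeapBuild S S.length) (Set.Iic S.length) ∧
      (∀ p ∈ posHeapBuild S S.length, ∀ q ∈ posHeapBuild S S.length,
        p <+: q → lab p ≤ lab q) ∧
      (∀ p ∈ posHeapBuild S S.length, 1 ≤ lab p → p <+: S.drop (lab p - 1)) := by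
  have hfresh : ∀ i < S.length, S.drop i ∉ posHeapBuild S i := fun i hi => by
    subst hS
    exact drop_not_mem_posHeapBuild hc (by simpa [Nat.lt_succ_iff] using hi)
  refine ⟨fun i hi => List.exists_find?_inits_not_mem (hfresh i hi), posHeapLabel S,
    posHeapLabel_nil, fun _ _ _ => posHeapLabel_of_find?_eq_some, posHeapBuild_prefix_closed S _,
    posHeapLabel_bijOn hfresh, fun _ _ _ hq => posHeapLabel_le_of_prefix hq,
    fun _ _ => prefix_drop_posHeapLabel_sub_one⟩
end

section
/- Inserting dividers every 2M characters (as in the construction of S' ! S'') guarantees that no two distinct suffixes of the combined string S' ! S'' share a common prefix of length more than 4M, and hence the position heap of S' ! S'' has height O(M). -/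
/-!
A common prefix of two distinct suffixes of `S' ! S''` contains no divider: every divider occurs
once, so it would sit at two different positions. The prefix therefore lies inside one
divider-free run, and these have length at most `2M`. In a position heap, a node longer than
`h + 1` has prefixes of lengths `h + 1` and `h + 2`, which are nodes with distinct nonzero
labels; the shorter one is then a common prefix of two distinct suffixes, so it cannot exist
when `h` bounds such common prefixes.
-/

/-- Insert fresh divider symbols (right injections, numbered from `k`) after
every `2 * M` characters of `l`. -/
def withDividers {α : Type} (M : ℕ) (k : ℕ) (l : List α) : List (α ⊕ ℕ) :=
  if h : M = 0 ∨ l.length ≤ 2 * M then l.map Sum.inl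
  else (l.take (2 * M)).map Sum.inl ++ Sum.inr k :: withDividers M (k + 1) (l.drop (2 * M))
  termination_by l.length
  decreasing_by
    push_neg at h
    simp only [List.length_drop]
    omega

/-- The combined string `S' ! S''`, where `S'` is `S` with dividers after every
`2M` characters (tags `0, 1, ...`), `!` is a fresh symbol (tag
`2 * |S| + 2`), and `S''` is `S` with dividers after every `2M` characters
starting from position `M + 1` (tags from `|S| + 1`); all inserted symbols are
pairwise distinct and occur exactly once. -/
def combinedString {α : Type} (M : ℕ) (S : List α) : List (α ⊕ ℕ) :=
  withDividers M 0 S ++ Sum.inr (2 * S.length + 2) ::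
    (if S.length ≤ M then S.map Sum.inl
     else (S.take M).map Sum.inl ++ Sum.inr (S.length + 1) ::
       withDividers M (S.length + 2) (S.drop M))

namespace List

variable {β γ : Type*}

theorem IsInfix.isInfix_or_isInfix_of_append_cons {t u v : List β} {c : β}
    (h : t <:+: u ++ c :: v) (hc : c ∉ t) : t <:+: u ∨ t <:+: v := by
  rcases infix_append_iff.mp h with hu | hcv | ⟨t₁, t₂, rfl, ht₁, ht₂⟩
  · exact .inl hu
  · rcases infix_cons_iff.mp hcv with hp | hv
    · rcases prefix_cons_iff.mp hp with rfl | ⟨t', rfl, -⟩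
      · exact .inl nil_infix
      · exact absurd mem_cons_self hc
    · exact .inr hv
  · rcases prefix_cons_iff.mp ht₂ with rfl | ⟨t', rfl, -⟩
    · exact .inl (by simpa using ht₁.isInfix)
    · exact absurd (mem_append_right t₁ mem_cons_self) hc

theorem eq_of_nodup_filterMap {f : β → Option γ} {l : List β} (hl : (l.filterMap f).Nodup)
    {a b : ℕ} (ha : a < l.length) (hb : b < l.length) {c : γ} (hfa : f l[a] = some c)
    (hfb : f l[b] = some c) : a = b := by
  wlog hab : a < b generalizing a b
  · rcases Nat.lt_or_ge b a with hba | hba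
    · exact (this hb ha hfb hfa hba).symm
    · omega
  rw [← take_append_drop b l, filterMap_append, nodup_append] at hl
  have hc_take : c ∈ (l.take b).filterMap f :=
    mem_filterMap.mpr ⟨l[a], mem_take_iff_getElem.mpr ⟨a, by omega, rfl⟩, hfa⟩
  have hc_drop : c ∈ (l.drop b).filterMap f :=
    mem_filterMap.mpr ⟨l[b], mem_drop_iff_getElem.mpr ⟨0, by omega, rfl⟩, hfb⟩
  exact (hl.2.2 c hc_take c hc_drop rfl).elim

end List

open List

section Runs

variable {α β : Type*}

def RunsBoundedBy (n : ℕ) (l : List (α ⊕ β)) : Prop :=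
  ∀ t, t <:+: l → (∀ x ∈ t, x.isLeft) → t.length ≤ n

theorem runsBoundedBy_map_inl {n : ℕ} {l : List α} (hl : l.length ≤ n) :
    RunsBoundedBy n (l.map (Sum.inl : α → α ⊕ β)) :=
  fun _ ht _ => ht.length_le.trans (by simpa using hl)

theorem RunsBoundedBy.append_inr_cons {n : ℕ} {u v : List (α ⊕ β)} (hu : RunsBoundedBy n u)
    (hv : RunsBoundedBy n v) (k : β) : RunsBoundedBy n (u ++ Sum.inr k :: v) := by
  intro t ht hleft
  have hk : Sum.inr k ∉ t := fun hk => by simpa using hleft _ hk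
  rcases ht.isInfix_or_isInfix_of_append_cons hk with htu | htv
  · exact hu t htu hleft
  · exact hv t htv hleft

theorem RunsBoundedBy.length_le_of_prefix_drop {n : ℕ} {L : List (α ⊕ β)}
    (hruns : RunsBoundedBy n L) (htags : (L.filterMap Sum.getRight?).Nodup) {i j : ℕ}
    (hij : i ≠ j) {t : List (α ⊕ β)} (hi : t <+: L.drop i) (hj : t <+: L.drop j) :
    t.length ≤ n := by
  refine hruns t (hi.isInfix.trans (drop_suffix i L).isInfix) fun x hx => ?_
  obtain ⟨d, hd, rfl⟩ := getElem_of_mem hx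
  cases hx : t[d] with
  | inl a => rfl
  | inr k =>
    have hdi : i + d < L.length := by have := hi.length_le; rw [length_drop] at this; omega
    have hdj : j + d < L.length := by have := hj.length_le; rw [length_drop] at this; omega
    have hLi : L[i + d] = Sum.inr k := by rw [← hx, hi.getElem hd, getElem_drop]
    have hLj : L[j + d] = Sum.inr k := by rw [← hx, hj.getElem hd, getElem_drop]
    have := eq_of_nodup_filterMap htags hdi hdj (c := k) (by simp [hLi]) (by simp [hLj])
    omega

theorem filterMap_getRight?_map_inl (l : List α) :
    (l.map (Sum.inl : α → α ⊕ β)).filterMap Sum.getRight? = [] := by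
  simp [filterMap_map, Function.comp_def]

end Runs

section Dividers

variable {α : Type} {M : ℕ}

theorem runsBoundedBy_withDividers (hM : 1 ≤ M) (k : ℕ) (l : List α) :
    RunsBoundedBy (2 * M) (withDividers M k l) := by
  induction k, l using withDividers.induct M with
  | case1 k l h =>
    rw [withDividers, dif_pos h]
    exact runsBoundedBy_map_inl (by omega)
  | case2 k l h ih =>
    rw [withDividers, dif_neg h]
    exact (runsBoundedBy_map_inl (by simp)).append_inr_cons ih k

theorem withDividers_tags_sublist (M k : ℕ) (l : List α) :
    (withDividers M k l).filterMap Sum.getRight? <+ range' k l.length := by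
  induction k, l using withDividers.induct M with
  | case1 k l h =>
    rw [withDividers, dif_pos h, filterMap_getRight?_map_inl]
    exact nil_sublist _
  | case2 k l h ih =>
    rw [withDividers, dif_neg h, filterMap_append, filterMap_getRight?_map_inl, filterMap_cons]
    obtain ⟨m, hm⟩ : ∃ m, l.length = m + 1 := ⟨l.length - 1, by omega⟩
    rw [hm, range'_succ]
    exact (ih.trans (range'_sublist_right.mpr (by rw [length_drop]; omega))).cons_cons k

theorem runsBoundedBy_combinedString (hM : 1 ≤ M) (S : List α) :
    RunsBoundedBy (2 * M) (combinedString M S) := by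
  refine (runsBoundedBy_withDividers hM 0 S).append_inr_cons ?_ _
  split_ifs with h
  · exact runsBoundedBy_map_inl (by omega)
  · exact (runsBoundedBy_map_inl (by rw [length_take]; omega)).append_inr_cons
      (runsBoundedBy_withDividers hM _ _) _

/-- The tags of `S'` lie in `[0, |S|)`, those of `S''` in `[|S| + 1, 2|S| + 2)`, and `!` has tag
`2|S| + 2`. -/
theorem combinedString_tags_nodup (M : ℕ) (S : List α) :
    ((combinedString M S).filterMap Sum.getRight?).Nodup := by
  set n := S.length
  have hS' := withDividers_tags_sublist M 0 S
  have hS'' : (if n ≤ M then S.map Sum.inl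
      else (S.take M).map Sum.inl ++ Sum.inr (n + 1) ::
        withDividers M (n + 2) (S.drop M)).filterMap Sum.getRight? <+ range' (n + 1) (n + 1) := by
    split_ifs with h
    · rw [filterMap_getRight?_map_inl]
      exact nil_sublist _
    · rw [filterMap_append, filterMap_getRight?_map_inl, filterMap_cons, range'_succ]
      exact ((withDividers_tags_sublist M _ _).trans
        (range'_sublist_right.mpr (by rw [length_drop]; omega))).cons_cons _
  rw [combinedString, filterMap_append, filterMap_cons, Sum.getRight?_inr]
  refine nodup_append.mpr ⟨(nodup_range' ..).sublist hS',
    nodup_cons.mpr ⟨fun h => ?_, (nodup_range' ..).sublist hS''⟩, fun a ha b hb => ?_⟩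
  · have := mem_range'_1.mp (hS''.subset h)
    omega
  · have ha' := mem_range'_1.mp (hS'.subset ha)
    rcases mem_cons.mp hb with rfl | hb
    · omega
    · have := mem_range'_1.mp (hS''.subset hb)
      omega

end Dividers

theorem length_le_succ_of_prefix_closed {β : Type*} {L : List β} {h : ℕ}
    (hlcp : ∀ i j, i ≠ j → ∀ t, t <+: L.drop i → t <+: L.drop j → t.length ≤ h)
    {nodes : Set (List β)} {lab : List β → ℕ} (hclosed : ∀ p ∈ nodes, ∀ q, q <+: p → q ∈ nodes)
    (hinj : Set.InjOn lab nodes) (hroot : [] ∈ nodes) (hlab_root : lab [] = 0)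
    (hpos : ∀ p ∈ nodes, 1 ≤ lab p → p <+: L.drop (lab p - 1)) {p : List β} (hp : p ∈ nodes) :
    p.length ≤ h + 1 := by
  by_contra! hlong
  have hnode (m : ℕ) : p.take m ∈ nodes := hclosed p hp _ (take_prefix m p)
  have hlab_pos (m : ℕ) (hm : m ≠ 0) : 1 ≤ lab (p.take m) := by
    by_contra! h0
    have := congrArg length (hinj (hnode m) hroot (by omega))
    rw [length_take, length_nil] at this
    omega
  have hlab_ne : lab (p.take (h + 1)) ≠ lab (p.take (h + 2)) := fun heq => by
    have := congrArg length (hinj (hnode _) (hnode _) heq)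
    rw [length_take, length_take] at this
    omega
  have hshort := hlcp (lab (p.take (h + 1)) - 1) (lab (p.take (h + 2)) - 1)
    (by have := hlab_pos (h + 1); have := hlab_pos (h + 2); omega) _
    (hpos _ (hnode _) (hlab_pos _ (by omega)))
    ((take_prefix_take_left (by omega)).trans (hpos _ (hnode _) (hlab_pos (h + 2) (by omega))))
  rw [length_take] at hshort
  omega

theorem combinedString_lcp_le_and_heap_height_general
    {α : Type} (M : ℕ) (hM : 1 ≤ M) (S : List α) :
    (∀ i j : ℕ, i < (combinedString M S).length → j < (combinedString M S).length →
      i ≠ j → ∀ t : List (α ⊕ ℕ),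
        t <+: (combinedString M S).drop i → t <+: (combinedString M S).drop j →
        t.length ≤ 4 * M) ∧
    (∀ (nodes : Finset (List (α ⊕ ℕ))) (lab : List (α ⊕ ℕ) → ℕ),
      (∀ p ∈ nodes, ∀ q : List (α ⊕ ℕ), q <+: p → q ∈ nodes) →
      Set.BijOn lab ↑nodes (Set.Iic (combinedString M S).length) →
      (([] : List (α ⊕ ℕ)) ∈ nodes ∧ lab [] = 0) →
      (∀ p ∈ nodes, ∀ q ∈ nodes, p <+: q → lab p ≤ lab q) →
      (∀ p ∈ nodes, 1 ≤ lab p → p <+: (combinedString M S).drop (lab p - 1)) →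
      ∀ p ∈ nodes, p.length ≤ 4 * M + 1) := by
  have hlcp (i j : ℕ) (hij : i ≠ j) (t : List (α ⊕ ℕ)) (hi : t <+: (combinedString M S).drop i)
      (hj : t <+: (combinedString M S).drop j) : t.length ≤ 4 * M :=
    ((runsBoundedBy_combinedString hM S).length_le_of_prefix_drop
      (combinedString_tags_nodup M S) hij hi hj).trans (by omega)
  refine ⟨fun i j _ _ => hlcp i j, ?_⟩
  intro nodes lab hclosed hbij hroot _ hpos p hp
  exact length_le_succ_of_prefix_closed hlcp hclosed hbij.injOn hroot.1 hroot.2 hpos hp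

/-- Inserting dividers every `2M` characters guarantees that no
two distinct suffixes of `S' ! S''` share a common prefix of length more than
`4M`; hence (by the height bound for position heaps) every node of any
position heap for `S' ! S''` has depth at most `4M + 1`, i.e. the height is
`O(M)`. -/
theorem combinedString_lcp_le_and_heap_height
    {α : Type} [DecidableEq α] (M : ℕ) (hM : 1 ≤ M) (S : List α) :
    (∀ i j : ℕ, i < (combinedString M S).length → j < (combinedString M S).length →
      i ≠ j → ∀ t : List (α ⊕ ℕ),
        t <+: (combinedString M S).drop i → t <+: (combinedString M S).drop j →
        t.length ≤ 4 * M) ∧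
    (∀ (nodes : Finset (List (α ⊕ ℕ))) (lab : List (α ⊕ ℕ) → ℕ),
      (∀ p ∈ nodes, ∀ q : List (α ⊕ ℕ), q <+: p → q ∈ nodes) →
      Set.BijOn lab ↑nodes (Set.Iic (combinedString M S).length) →
      (([] : List (α ⊕ ℕ)) ∈ nodes ∧ lab [] = 0) →
      (∀ p ∈ nodes, ∀ q ∈ nodes, p <+: q → lab p ≤ lab q) →
      (∀ p ∈ nodes, 1 ≤ lab p → p <+: (combinedString M S).drop (lab p - 1)) →
      ∀ p ∈ nodes, p.length ≤ 4 * M + 1) :=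
  combinedString_lcp_le_and_heap_height_general M hM S
end

section
/- Let D[1..n] be the array where D[i] is the depth in the position heap of the node labelled SA[i], and let E[1..n] be the sequence of depths of non-root nodes in pre-order traversal of the heap. Then E is a permutation of D; more precisely, for every depth d and rank r, the position i with D[i] equal to the r-th occurrence of d in D satisfies: SA[i] is the label of the r-th node from the left at depth d in the heap, which is also the node at the position of the r-th occurrence of d in E. -/
/-!
The labels put the non-root nodes in bijection with the positions `1, …, n`, so the nodes
labelled `SA[1], …, SA[n]` enumerate the non-root nodes and `D` is a permutation of `E`.
A node's path label is a prefix of the suffix starting at its label, so among nodes of equal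
depth the suffix-array order agrees with the lexicographic order. Hence both enumerations,
restricted to depth `d`, are the same sorted list, and the `r`-th occurrence of `d` in `D`
and in `E` designate the same node: the `r`-th node from the left at depth `d`.
-/

namespace List

variable {β : Type*}

theorem count_map_eq_length_filter {γ : Type*} [DecidableEq γ] (g : β → γ) (b : γ) (l : List β) :
    (l.map g).count b = (l.filter fun x => g x = b).length := by
  rw [count_eq_countP, countP_map, countP_eq_length_filter]
  rfl

theorem getElem?_filter_length_filter_take {P : β → Bool} {M : List β} {i : ℕ} {x : β}
    (hx : M[i]? = some x) (hPx : P x) :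
    (M.filter P)[((M.take i).filter P).length]? = some x := by
  obtain ⟨hi, rfl⟩ := getElem?_eq_some_iff.mp hx
  have hsplit : M.filter P = (M.take i).filter P ++ M[i] :: (M.drop (i + 1)).filter P := by
    conv_lhs => rw [← take_append_drop i M, drop_eq_getElem_cons hi]
    rw [filter_append, filter_cons_of_pos hPx]
  rw [hsplit, getElem?_append_right le_rfl]
  simp

theorem exists_getElem?_eq_of_getElem?_filter {P : β → Bool} {L : List β} {r : ℕ} {p : β}
    (h : (L.filter P)[r]? = some p) :
    ∃ t, L[t]? = some p ∧ ((L.take t).filter P).length = r := by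
  induction L generalizing r with
  | nil => simp at h
  | cons a L ih =>
    by_cases hPa : P a
    · rw [filter_cons_of_pos hPa] at h
      cases r with
      | zero => exact ⟨0, by simpa using h, by simp⟩
      | succ r =>
        obtain ⟨t, ht, hc⟩ := ih (by simpa using h)
        exact ⟨t + 1, by simpa using ht, by simp [filter_cons_of_pos hPa, hc]⟩
    · rw [filter_cons_of_neg hPa] at h
      obtain ⟨t, ht, hc⟩ := ih h
      exact ⟨t + 1, by simpa using ht, by simp [filter_cons_of_neg hPa, hc]⟩

theorem Lex.of_isPrefix {r : β → β → Prop} {a b a' b' : List β} (ha : a <+: a') (hb : b <+: b')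
    (hlen : a.length = b.length) (hne : a ≠ b) (h : Lex r a' b') : Lex r a b := by
  induction a generalizing b a' b' with
  | nil => cases b with
    | nil => exact absurd rfl hne
    | cons => exact Lex.nil
  | cons x a ih =>
    obtain _ | ⟨y, b⟩ := b
    · simp at hlen
    obtain ⟨u, rfl⟩ := ha
    obtain ⟨v, rfl⟩ := hb
    cases h with
    | cons h => exact Lex.cons (ih (prefix_append _ _) (prefix_append _ _) (by simpa using hlen)
        (fun e => hne (by rw [e])) h)
    | rel h => exact Lex.rel h

theorem map_range_perm_sort [LinearOrder β] {n : ℕ} {f : ℕ → β} {s : Finset β}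
    (hf : Set.BijOn f (Set.Iio n) s) : ((range n).map f).Perm (s.sort (· ≤ ·)) := by
  refine perm_of_nodup_nodup_toFinset_eq
    (Nodup.map_on (fun k hk l hl => hf.injOn (by simpa using hk) (by simpa using hl)) nodup_range)
    (s.sort_nodup _) ?_
  ext x
  rw [Finset.sort_toFinset, mem_toFinset, ← Finset.mem_coe, ← hf.image_eq]
  simp

end List

theorem Finset.sort_filter {β : Type*} [LinearOrder β] (p : β → Prop) [DecidablePred p]
    (s : Finset β) :
    (s.filter p).sort (· ≤ ·) = (s.sort (· ≤ ·)).filter p := by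
  refine List.Perm.eq_of_pairwise' ((s.filter p).pairwise_sort _)
    ((s.pairwise_sort _).sublist List.filter_sublist) ?_
  refine List.perm_of_nodup_nodup_toFinset_eq (Finset.sort_nodup _ _)
    ((s.sort_nodup _).filter _) ?_
  ext x
  simp

section PositionHeap

variable {α : Type} [LinearOrder α] {S : List α} {nodes : Finset (List α)} {lab : List α → ℕ}
  {nodeOf : ℕ → List α} {SA : ℕ → ℕ}

/-- The heap nodes in suffix-array order; index `k` holds the node labelled `SA (k + 1)`. -/
def saOrder (nodeOf : ℕ → List α) (SA : ℕ → ℕ) (n : ℕ) : List (List α) :=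
  (List.range n).map fun k => nodeOf (SA (k + 1))

theorem one_le_lab (hbij : Set.BijOn lab ↑nodes (Set.Iic S.length))
    (hroot : ([] : List α) ∈ nodes ∧ lab [] = 0) {p : List α} (hp : p ∈ nodes.erase []) :
    1 ≤ lab p := by
  obtain ⟨hne, hp⟩ := Finset.mem_erase.mp hp
  exact Nat.one_le_iff_ne_zero.mpr fun h0 => hne (hbij.injOn hp hroot.1 (h0.trans hroot.2.symm))

theorem bijOn_nodeOf (hbij : Set.BijOn lab ↑nodes (Set.Iic S.length))
    (hroot : ([] : List α) ∈ nodes ∧ lab [] = 0)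
    (hnodeOf : ∀ i ≤ S.length, nodeOf i ∈ nodes ∧ lab (nodeOf i) = i) :
    Set.BijOn nodeOf (Set.Icc 1 S.length) ↑(nodes.erase []) := by
  refine Set.InvOn.bijOn (f' := lab) ⟨fun i hi => (hnodeOf i hi.2).2, fun p hp => ?_⟩ ?_ ?_
  · have hp := (Finset.mem_erase.mp hp).2
    have hlab := hnodeOf _ (hbij.mapsTo hp)
    exact hbij.injOn hlab.1 hp hlab.2
  · intro i hi
    refine Finset.mem_erase.mpr ⟨fun h => ?_, (hnodeOf i hi.2).1⟩
    have := (hnodeOf i hi.2).2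
    rw [h, hroot.2] at this
    exact absurd hi.1 (by omega)
  · intro p hp
    exact ⟨one_le_lab hbij hroot hp, hbij.mapsTo (Finset.mem_erase.mp hp).2⟩

theorem bijOn_saNode (hbij : Set.BijOn lab ↑nodes (Set.Iic S.length))
    (hroot : ([] : List α) ∈ nodes ∧ lab [] = 0)
    (hnodeOf : ∀ i ≤ S.length, nodeOf i ∈ nodes ∧ lab (nodeOf i) = i)
    (hSA : Set.BijOn SA (Set.Icc 1 S.length) (Set.Icc 1 S.length)) :
    Set.BijOn (fun k => nodeOf (SA (k + 1))) (Set.Iio S.length) ↑(nodes.erase []) := by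
  have hsucc : Set.BijOn (· + 1) (Set.Iio S.length) (Set.Icc 1 S.length) :=
    ⟨fun k hk => ⟨by simp, by simpa [Nat.succ_le_iff] using hk⟩, fun _ _ _ _ h => by simpa using h,
      fun j ⟨hj1, hj2⟩ => ⟨j - 1, by simp only [Set.mem_Iio]; omega, by simp only; omega⟩⟩
  exact ((bijOn_nodeOf hbij hroot hnodeOf).comp hSA).comp hsucc

/-- Two nodes of equal depth are ordered like the suffixes starting at their labels, since each
node's path label is a prefix of its suffix. -/
theorem pairwise_lt_filter_saOrder (hbij : Set.BijOn lab ↑nodes (Set.Iic S.length))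
    (hroot : ([] : List α) ∈ nodes ∧ lab [] = 0)
    (hpath : ∀ p ∈ nodes, 1 ≤ lab p → p <+: S.drop (lab p - 1))
    (hnodeOf : ∀ i ≤ S.length, nodeOf i ∈ nodes ∧ lab (nodeOf i) = i)
    (hSA : Set.BijOn SA (Set.Icc 1 S.length) (Set.Icc 1 S.length))
    (hSAsorted : ∀ i j : ℕ, 1 ≤ i → i < j → j ≤ S.length →
      List.Lex (· < ·) (S.drop (SA i - 1)) (S.drop (SA j - 1))) (d : ℕ) :
    ((saOrder nodeOf SA S.length).filter fun q => q.length = d).Pairwise (· < ·) := by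
  have hN := bijOn_saNode hbij hroot hnodeOf hSA
  have hlab : ∀ k < S.length, lab (nodeOf (SA (k + 1))) = SA (k + 1) := fun k hk =>
    (hnodeOf _ (hSA.mapsTo (show k + 1 ∈ Set.Icc 1 S.length from ⟨by omega, by omega⟩)).2).2
  refine List.pairwise_filter.mpr (List.pairwise_map.mpr (List.pairwise_lt_range.imp_of_mem ?_))
  intro k l hk hl hkl hdk hdl
  rw [List.mem_range] at hk hl
  have hmem : ∀ j < S.length, nodeOf (SA (j + 1)) ∈ nodes.erase [] := fun j hj => hN.mapsTo hj
  refine List.Lex.of_isPrefix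
    (hpath _ (Finset.mem_of_mem_erase (hmem k hk)) (one_le_lab hbij hroot (hmem k hk)))
    (hpath _ (Finset.mem_of_mem_erase (hmem l hl)) (one_le_lab hbij hroot (hmem l hl)))
    (by simp_all) (fun h => hkl.ne (hN.injOn hk hl h)) ?_
  rw [hlab k hk, hlab l hl]
  exact hSAsorted (k + 1) (l + 1) (by omega) (by omega) (by omega)

end PositionHeap

theorem positionHeap_D_perm_E_and_rank_correspondence_general
    {α : Type} [LinearOrder α]
    (S : List α)
    (nodes : Finset (List α)) (lab : List α → ℕ) (nodeOf : ℕ → List α)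
    (hbij : Set.BijOn lab ↑nodes (Set.Iic S.length))
    (hroot : ([] : List α) ∈ nodes ∧ lab [] = 0)
    (hpath : ∀ p ∈ nodes, 1 ≤ lab p → p <+: S.drop (lab p - 1))
    (hnodeOf : ∀ i ≤ S.length, nodeOf i ∈ nodes ∧ lab (nodeOf i) = i)
    (SA : ℕ → ℕ)
    (hSA : Set.BijOn SA (Set.Icc 1 S.length) (Set.Icc 1 S.length))
    (hSAsorted : ∀ i j : ℕ, 1 ≤ i → i < j → j ≤ S.length →
      List.Lex (· < ·) (S.drop (SA i - 1)) (S.drop (SA j - 1))) :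
    -- `L` is the pre-order (lexicographic) enumeration of the non-root nodes,
    -- `E` its list of depths, and `D` the list of depths of nodes labelled
    -- `SA[1], ..., SA[n]`.
    List.Perm
      ((List.range S.length).map (fun k => (nodeOf (SA (k + 1))).length))
      (((nodes.erase ([] : List α)).sort (· ≤ ·)).map List.length) ∧
    (∀ d r i : ℕ, i < S.length →
      ((List.range S.length).map (fun k => (nodeOf (SA (k + 1))).length))[i]? = some d →
      (((List.range S.length).map
          (fun k => (nodeOf (SA (k + 1))).length)).take i).count d = r →
      ∃ (p : List α) (t : ℕ),
        -- `p` is the `r`-th node from the left at depth `d`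
        (((nodes.filter (fun q => q.length = d)).sort (· ≤ ·))[r]? = some p) ∧
        -- its label is `SA[i]`
        lab p = SA (i + 1) ∧
        -- and it sits at the position of the `r`-th occurrence of `d` in `E`
        (((nodes.erase ([] : List α)).sort (· ≤ ·)).map List.length)[t]? = some d ∧
        ((((nodes.erase ([] : List α)).sort (· ≤ ·)).map List.length).take t).count d = r ∧
        ((nodes.erase ([] : List α)).sort (· ≤ ·))[t]? = some p) := by
  set M := saOrder nodeOf SA S.length
  set L := (nodes.erase ([] : List α)).sort (· ≤ ·)
  have hD : (List.range S.length).map (fun k => (nodeOf (SA (k + 1))).length) =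
      M.map List.length := (List.map_map ..).symm
  have hN := bijOn_saNode hbij hroot hnodeOf hSA
  have hperm : M.Perm L := List.map_range_perm_sort hN
  refine ⟨hD ▸ hperm.map List.length, fun d r i hi hDi hcount => ?_⟩
  rw [hD] at hDi hcount
  set p := nodeOf (SA (i + 1))
  have hMi : M[i]? = some p := by simp [M, saOrder, p, hi]
  have hpd : p.length = d := by simpa [hMi] using hDi
  have hd : d ≠ 0 := fun h =>
    (Finset.mem_erase.mp (hN.mapsTo hi)).1 (List.length_eq_zero_iff.mp (hpd.trans h))
  have hML : M.filter (·.length = d) = L.filter (·.length = d) :=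
    List.Perm.eq_of_pairwise'
      ((pairwise_lt_filter_saOrder hbij hroot hpath hnodeOf hSA hSAsorted d).imp le_of_lt)
      ((Finset.pairwise_sort _ _).sublist List.filter_sublist) (hperm.filter _)
  have hsort : (nodes.filter (·.length = d)).sort (· ≤ ·) = L.filter (·.length = d) := by
    rw [← Finset.sort_filter, Finset.filter_erase, Finset.erase_eq_of_notMem]
    simp [Ne.symm hd]
  have hMr : (M.filter (·.length = d))[r]? = some p := by
    rw [← hcount, ← List.map_take, List.count_map_eq_length_filter]
    exact List.getElem?_filter_length_filter_take hMi (by simpa using hpd)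
  obtain ⟨t, hLt, htr⟩ := List.exists_getElem?_eq_of_getElem?_filter (hML ▸ hMr)
  refine ⟨p, t, hsort ▸ hML ▸ hMr, (hnodeOf _ (hSA.mapsTo ⟨by omega, by omega⟩).2).2,
    by simp [hLt, hpd], ?_, hLt⟩
  rwa [← List.map_take, List.count_map_eq_length_filter]

/-- Let `D[1..n]` be the array where `D[i]` is the depth in the
position heap of the node labelled `SA[i]`, and let `E[1..n]` be the sequence
of depths of the non-root nodes in pre-order traversal of the heap (pre-order
traversal enumerates the nodes in lexicographic order of path labels, where a
prefix precedes its extensions).  Then `E` is a permutation of `D`; moreover,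
for every depth `d` and rank `r`, if `D[i]` is the `r`-th occurrence of `d` in
`D` (indices and rank `0`-based here), then `SA[i]` is the label of the `r`-th
node from the left at depth `d` in the heap, which is also the node at the
position of the `r`-th occurrence of `d` in `E`. -/
theorem positionHeap_D_perm_E_and_rank_correspondence
    {α : Type} [LinearOrder α]
    (S T : List α) (c : α) (hS : S = T ++ [c]) (hc : c ∉ T)
    (nodes : Finset (List α)) (lab : List α → ℕ) (nodeOf : ℕ → List α)
    (hpc : ∀ p ∈ nodes, ∀ q : List α, q <+: p → q ∈ nodes)
    (hbij : Set.BijOn lab ↑nodes (Set.Iic S.length))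
    (hroot : ([] : List α) ∈ nodes ∧ lab [] = 0)
    (hheap : ∀ p ∈ nodes, ∀ q ∈ nodes, p <+: q → lab p ≤ lab q)
    (hpath : ∀ p ∈ nodes, 1 ≤ lab p → p <+: S.drop (lab p - 1))
    (hnodeOf : ∀ i ≤ S.length, nodeOf i ∈ nodes ∧ lab (nodeOf i) = i)
    (SA : ℕ → ℕ)
    (hSA : Set.BijOn SA (Set.Icc 1 S.length) (Set.Icc 1 S.length))
    (hSAsorted : ∀ i j : ℕ, 1 ≤ i → i < j → j ≤ S.length →
      List.Lex (· < ·) (S.drop (SA i - 1)) (S.drop (SA j - 1))) :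
    -- `L` is the pre-order (lexicographic) enumeration of the non-root nodes,
    -- `E` its list of depths, and `D` the list of depths of nodes labelled
    -- `SA[1], ..., SA[n]`.
    List.Perm
      ((List.range S.length).map (fun k => (nodeOf (SA (k + 1))).length))
      (((nodes.erase ([] : List α)).sort (· ≤ ·)).map List.length) ∧
    (∀ d r i : ℕ, i < S.length →
      ((List.range S.length).map (fun k => (nodeOf (SA (k + 1))).length))[i]? = some d →
      (((List.range S.length).map
          (fun k => (nodeOf (SA (k + 1))).length)).take i).count d = r →
      ∃ (p : List α) (t : ℕ),
        -- `p` is the `r`-th node from the left at depth `d`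
        (((nodes.filter (fun q => q.length = d)).sort (· ≤ ·))[r]? = some p) ∧
        -- its label is `SA[i]`
        lab p = SA (i + 1) ∧
        -- and it sits at the position of the `r`-th occurrence of `d` in `E`
        (((nodes.erase ([] : List α)).sort (· ≤ ·)).map List.length)[t]? = some d ∧
        ((((nodes.erase ([] : List α)).sort (· ≤ ·)).map List.length).take t).count d = r ∧
        ((nodes.erase ([] : List α)).sort (· ≤ ·))[t]? = some p) :=
  positionHeap_D_perm_E_and_rank_correspondence_general S nodes lab nodeOf hbij hroot hpath hnodeOf
    SA hSA hSAsorted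
end

section
/- In the suffix heap of S, maximal-reach pointers are monotone: if i < i' and the maximal-reach pointer of the node labelled i points to the node labelled j, and that of the node labelled i' points to the node labelled j', then j ≤ j'. -/
/-! If the maximal reach `j` of `i` satisfies `j ≥ i'`, then the suffix of rank `i'` lies
lexicographically between those of ranks `i` and `j`, both of which start with the path label
of node `j`; so that label is also a prefix of suffix `i'`, hence of the path label of `j'`, and
since labels are pre-order ranks, `j ≤ j'`. Otherwise `j < i' ≤ j'`, because node `i'` itself lies
on the path of suffix `i'`. -/

namespace List

variable {α : Type*} [LT α] [Std.Asymm (· < · : α → α → Prop)]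

theorem IsPrefix.of_lt_of_lt {p l₁ l₂ l₃ : List α} (h₁ : p <+: l₁) (h₃ : p <+: l₃)
    (h₁₂ : l₁ < l₂) (h₂₃ : l₂ < l₃) : p <+: l₂ := by
  induction p generalizing l₁ l₂ l₃ with
  | nil => exact nil_prefix
  | cons a p ih =>
    obtain ⟨l₁, rfl, hp₁⟩ := cons_prefix_iff.mp h₁
    obtain ⟨l₃, rfl, hp₃⟩ := cons_prefix_iff.mp h₃
    cases l₂ with
    | nil => exact absurd h₁₂ (not_lt_nil _)
    | cons b l₂ =>
      rw [cons_lt_cons_iff] at h₁₂ h₂₃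
      rcases h₁₂ with hab | ⟨rfl, h₁₂⟩
      · rcases h₂₃ with hba | ⟨rfl, -⟩
        · exact absurd hba (Std.Asymm.asymm _ _ hab)
        · exact absurd hab (Std.Asymm.asymm _ _ hab)
      · rcases h₂₃ with haa | ⟨-, h₂₃⟩
        · exact absurd haa (Std.Asymm.asymm _ _ haa)
        · exact cons_prefix_cons.mpr ⟨rfl, ih hp₁ hp₃ h₁₂ h₂₃⟩

end List

section

variable {α β : Type*} [LinearOrder α] [LinearOrder β]
  {f : β → List α} {s : Set β} {a b : β}

theorem StrictMonoOn.le_of_isPrefix (hf : StrictMonoOn f s) (ha : a ∈ s) (hb : b ∈ s)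
    (h : f a <+: f b) : a ≤ b := by
  by_contra! hba
  exact h.le (hf hb ha hba)

theorem StrictMonoOn.le_of_isPrefix_of_length_le (hf : StrictMonoOn f s) (ha : a ∈ s)
    (hb : b ∈ s) {l : List α} (hal : f a <+: l) (hbl : f b <+: l)
    (hlen : (f a).length ≤ (f b).length) : a ≤ b :=
  hf.le_of_isPrefix ha hb (List.prefix_of_prefix_length_le hal hbl hlen)

end

theorem suffixHeap_maximalReach_monotone_general
    {α : Type} [LinearOrder α]
    (S : List α)
    (SA : ℕ → ℕ)
    (hSAsorted : ∀ i j : ℕ, 1 ≤ i → i < j → j ≤ S.length →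
      List.Lex (· < ·) (S.drop (SA i - 1)) (S.drop (SA j - 1)))
    (nodeOf : ℕ → List α)
    -- labels equal pre-order ranks: the pre-order (lexicographic-with-prefix)
    -- order of the nodes agrees with the order of their labels
    (hrank : ∀ i j : ℕ, i ≤ S.length → j ≤ S.length → i < j → nodeOf i < nodeOf j)
    (hpath : ∀ i : ℕ, 1 ≤ i → i ≤ S.length → nodeOf i <+: S.drop (SA i - 1)) :
    ∀ i i' j j' : ℕ, 1 ≤ i → i < i' → i' ≤ S.length → j ≤ S.length → j' ≤ S.length →
      -- `nodeOf j` is the maximal reach of the node labelled `i`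
      (nodeOf j <+: S.drop (SA i - 1)) →
      (∀ k ≤ S.length, nodeOf k <+: S.drop (SA i - 1) →
        (nodeOf k).length ≤ (nodeOf j).length) →
      -- `nodeOf j'` is the maximal reach of the node labelled `i'`
      (nodeOf j' <+: S.drop (SA i' - 1)) →
      (∀ k ≤ S.length, nodeOf k <+: S.drop (SA i' - 1) →
        (nodeOf k).length ≤ (nodeOf j').length) →
      j ≤ j' := by
  intro i i' j j' hi hii' hi'n hjn hj'n hji _ hj'i' hj'max
  have hmono : StrictMonoOn nodeOf (Set.Iic S.length) := fun a ha b hb hab => hrank a b ha hb hab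
  have le_j' : ∀ k ≤ S.length, nodeOf k <+: S.drop (SA i' - 1) → k ≤ j' := fun k hk hki' =>
    hmono.le_of_isPrefix_of_length_le hk hj'n hki' hj'i' (hj'max k hk hki')
  rcases lt_or_ge j i' with hji' | hi'j
  · exact hji'.le.trans (le_j' i' hi'n (hpath i' (by omega) hi'n))
  · refine le_j' j hjn ?_
    rcases hi'j.eq_or_lt with rfl | hi'j
    · exact hpath i' (by omega) hi'n
    · exact hji.of_lt_of_lt (hpath j (by omega) hjn) (hSAsorted i i' hi hii' hi'n)
        (hSAsorted i' j (by omega) hi'j hjn)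

/-- In the suffix heap of `S` (a trie on `n + 1` nodes whose
node of label `i` — equal to its pre-order rank — has path label a prefix of
the lexicographically `i`-th suffix `S[SA(i)..n]`), maximal-reach pointers are
monotone: if `i < i'`, the maximal-reach pointer of the node labelled `i`
points to the node labelled `j`, and that of the node labelled `i'` points to
the node labelled `j'`, then `j ≤ j'`.  (The maximal reach of node `i` is the
deepest node whose path label is a prefix of `S[SA(i)..n]`.) -/
theorem suffixHeap_maximalReach_monotone
    {α : Type} [LinearOrder α]
    (S T : List α) (c : α) (hS : S = T ++ [c]) (hc : c ∉ T)
    (SA : ℕ → ℕ)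
    (hSA : Set.BijOn SA (Set.Icc 1 S.length) (Set.Icc 1 S.length))
    (hSAsorted : ∀ i j : ℕ, 1 ≤ i → i < j → j ≤ S.length →
      List.Lex (· < ·) (S.drop (SA i - 1)) (S.drop (SA j - 1)))
    (nodes : Finset (List α)) (nodeOf : ℕ → List α)
    (hpc : ∀ p ∈ nodes, ∀ q : List α, q <+: p → q ∈ nodes)
    (hbij : Set.BijOn nodeOf (Set.Iic S.length) ↑nodes)
    (hroot : nodeOf 0 = ([] : List α))
    -- labels equal pre-order ranks: the pre-order (lexicographic-with-prefix)
    -- order of the nodes agrees with the order of their labels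
    (hrank : ∀ i j : ℕ, i ≤ S.length → j ≤ S.length → i < j → nodeOf i < nodeOf j)
    (hpath : ∀ i : ℕ, 1 ≤ i → i ≤ S.length → nodeOf i <+: S.drop (SA i - 1)) :
    ∀ i i' j j' : ℕ, 1 ≤ i → i < i' → i' ≤ S.length → j ≤ S.length → j' ≤ S.length →
      -- `nodeOf j` is the maximal reach of the node labelled `i`
      (nodeOf j <+: S.drop (SA i - 1)) →
      (∀ k ≤ S.length, nodeOf k <+: S.drop (SA i - 1) →
        (nodeOf k).length ≤ (nodeOf j).length) →
      -- `nodeOf j'` is the maximal reach of the node labelled `i'`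
      (nodeOf j' <+: S.drop (SA i' - 1)) →
      (∀ k ≤ S.length, nodeOf k <+: S.drop (SA i' - 1) →
        (nodeOf k).length ≤ (nodeOf j').length) →
      j ≤ j' :=
  suffixHeap_maximalReach_monotone_general S SA hSAsorted nodeOf hrank hpath
end

section
/- In the suffix heap, if the maximal-reach pointer of the node labelled i points to the node labelled j at depth d, then for every k with i ≤ k ≤ j, the suffix S[SA[k]..n] has S[SA[j]..SA[j]+d−1] as a prefix (all suffixes of lexicographic rank between i and j share the same length-d prefix). -/
theorem List.IsPrefix.of_lex_of_lex {α : Type*} [Preorder α] {P A B C : List α}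
    (hPA : P <+: A) (hPC : P <+: C) (hAB : List.Lex (· < ·) A B)
    (hBC : List.Lex (· < ·) B C) : P <+: B := by
  induction P generalizing A B C with
  | nil => exact List.nil_prefix
  | cons p P ih =>
    obtain ⟨A', rfl⟩ := hPA
    obtain ⟨C', rfl⟩ := hPC
    cases hAB with
    | cons hAB' =>
      cases hBC with
      | rel hpp => exact absurd hpp (lt_irrefl p)
      | cons hBC' => exact (List.prefix_cons_inj p).mpr (ih ⟨A', rfl⟩ ⟨C', rfl⟩ hAB' hBC')
    | rel hpb =>
      cases hBC with
      | rel hbp => exact absurd (hpb.trans hbp) (lt_irrefl p)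
      | cons _ => exact absurd hpb (lt_irrefl p)

theorem suffixHeap_ranks_between_share_prefix_general
    {α : Type} [LinearOrder α]
    (S : List α)
    (SA : ℕ → ℕ)
    (hSAsorted : ∀ i j : ℕ, 1 ≤ i → i < j → j ≤ S.length →
      List.Lex (· < ·) (S.drop (SA i - 1)) (S.drop (SA j - 1)))
    (nodeOf : ℕ → List α)
    (hpath : ∀ i : ℕ, 1 ≤ i → i ≤ S.length → nodeOf i <+: S.drop (SA i - 1)) :
    ∀ i j d : ℕ, 1 ≤ i → i ≤ S.length → 1 ≤ j → j ≤ S.length →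
      (nodeOf j).length = d →
      -- `nodeOf j` is the maximal reach of the node labelled `i`
      (nodeOf j <+: S.drop (SA i - 1)) →
      (∀ k ≤ S.length, nodeOf k <+: S.drop (SA i - 1) →
        (nodeOf k).length ≤ (nodeOf j).length) →
      ∀ k : ℕ, i ≤ k → k ≤ j →
        ((S.drop (SA j - 1)).take d) <+: S.drop (SA k - 1) := by
  intro i j d hi _ hj hjS hd hji _ k hik hkj
  have hjj := hpath j hj hjS
  rw [← hd, ← List.prefix_iff_eq_take.mp hjj]
  rcases hkj.eq_or_lt with rfl | hkj
  · exact hjj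
  rcases hik.eq_or_lt with rfl | hik
  · exact hji
  exact hji.of_lex_of_lex hjj (hSAsorted i k hi hik (hkj.le.trans hjS))
    (hSAsorted k j (hi.trans hik.le) hkj hjS)

/-- In the suffix heap of `S`, if the maximal-reach pointer of
the node labelled `i` points to the node labelled `j` at depth `d`, then for
every `k` with `i ≤ k ≤ j`, the suffix `S[SA(k)..n]` has
`S[SA(j)..SA(j)+d-1]` as a prefix: all suffixes of lexicographic rank between
`i` and `j` share the same length-`d` prefix. -/
theorem suffixHeap_ranks_between_share_prefix
    {α : Type} [LinearOrder α]
    (S T : List α) (c : α) (hS : S = T ++ [c]) (hc : c ∉ T)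
    (SA : ℕ → ℕ)
    (hSA : Set.BijOn SA (Set.Icc 1 S.length) (Set.Icc 1 S.length))
    (hSAsorted : ∀ i j : ℕ, 1 ≤ i → i < j → j ≤ S.length →
      List.Lex (· < ·) (S.drop (SA i - 1)) (S.drop (SA j - 1)))
    (nodes : Finset (List α)) (nodeOf : ℕ → List α)
    (hpc : ∀ p ∈ nodes, ∀ q : List α, q <+: p → q ∈ nodes)
    (hbij : Set.BijOn nodeOf (Set.Iic S.length) ↑nodes)
    (hroot : nodeOf 0 = ([] : List α))
    (hrank : ∀ i j : ℕ, i ≤ S.length → j ≤ S.length → i < j → nodeOf i < nodeOf j)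
    (hpath : ∀ i : ℕ, 1 ≤ i → i ≤ S.length → nodeOf i <+: S.drop (SA i - 1)) :
    ∀ i j d : ℕ, 1 ≤ i → i ≤ S.length → 1 ≤ j → j ≤ S.length →
      (nodeOf j).length = d →
      -- `nodeOf j` is the maximal reach of the node labelled `i`
      (nodeOf j <+: S.drop (SA i - 1)) →
      (∀ k ≤ S.length, nodeOf k <+: S.drop (SA i - 1) →
        (nodeOf k).length ≤ (nodeOf j).length) →
      ∀ k : ℕ, i ≤ k → k ≤ j →
        ((S.drop (SA j - 1)).take d) <+: S.drop (SA k - 1) :=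
  suffixHeap_ranks_between_share_prefix_general S SA hSAsorted nodeOf hpath
end

section
/- For any string S with unique terminator and any pattern P of length m, the position heap search procedure is correct: position p is reported if and only if P occurs in S at position p. Formally, in the simplified case m ≤ height of the heap and letting v be the deepest node whose path label is a prefix of P with depth(v) = m: P occurs at position p in S if and only if either the node labelled p is in the subtree of v, or the node labelled p lies on the path from the root to v and its maximal-reach pointer points into the subtree of v. -/
/-!
The node labelled `p` and the pattern `P` are both prefixes of `S[p..n]`, hence comparable.
If `P` is the shorter one, `P` lies in the subtree of that node. Otherwise the node lies on the
root path to `P`; since `P` is itself a node, it is no longer than the maximal reach of `p`,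
which is also a prefix of `S[p..n]`, so the maximal reach lies in the subtree of `P`.
-/

theorem prefix_iff_of_prefix_of_maximal_reach {α : Type*} {P w r s : List α}
    (hw : w <+: s) (hr : r <+: s) (hreach : P <+: s → P.length ≤ r.length) :
    P <+: s ↔ P <+: w ∨ (w <+: P ∧ P <+: r) := by
  constructor
  · intro hP
    rcases List.prefix_or_prefix_of_prefix hP hw with hPw | hwP
    · exact Or.inl hPw
    · exact Or.inr ⟨hwP, List.prefix_of_prefix_length_le hP hr (hreach hP)⟩
  · rintro (hPw | ⟨-, hPr⟩)
    · exact hPw.trans hw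
    · exact hPr.trans hr

theorem positionHeap_search_correct_general
    {α : Type}
    (S : List α)
    (nodes : Finset (List α)) (lab : List α → ℕ) (nodeOf mrOf : ℕ → List α)
    (hpath : ∀ p ∈ nodes, 1 ≤ lab p → p <+: S.drop (lab p - 1))
    (hnodeOf : ∀ i ≤ S.length, nodeOf i ∈ nodes ∧ lab (nodeOf i) = i)
    -- `mrOf i` is the maximal reach of the node labelled `i`: the deepest node
    -- whose path label is a prefix of `S[i..n]`
    (hmr : ∀ i : ℕ, 1 ≤ i → i ≤ S.length →
      mrOf i ∈ nodes ∧ mrOf i <+: S.drop (i - 1) ∧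
      ∀ q ∈ nodes, q <+: S.drop (i - 1) → q.length ≤ (mrOf i).length)
    (P : List α) (m : ℕ) (hm : P.length = m)
    (v : List α) (hv : v ∈ nodes) (hvP : v <+: P) (hvm : v.length = m) :
    ∀ p : ℕ, 1 ≤ p → p ≤ S.length →
      (P <+: S.drop (p - 1) ↔
        (v <+: nodeOf p ∨ (nodeOf p <+: v ∧ v <+: mrOf p))) := by
  intro p hp1 hpn
  obtain rfl : v = P := hvP.eq_of_length (by omega)
  obtain ⟨hnode, hlab⟩ := hnodeOf p hpn
  obtain ⟨-, hmrPrefix, hmrMax⟩ := hmr p hp1 hpn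
  have hnodePrefix : nodeOf p <+: S.drop (p - 1) := by
    simpa only [hlab] using hpath _ hnode (by rwa [hlab])
  exact prefix_iff_of_prefix_of_maximal_reach hnodePrefix hmrPrefix (hmrMax v hv)

/-- Correctness of the position-heap search procedure in the
simplified case where the deepest node `v` whose path label is a prefix of the
pattern `P` has depth `m = |P|` (so `v`'s path label is `P` itself): `P`
occurs in `S` at position `p` (i.e. `P` is a prefix of `S[p..n]`) if and only
if the node labelled `p` is in the subtree of `v` (i.e. `v`'s path label is a
prefix of its path label), or the node labelled `p` lies on the path from the
root to `v` (its path label is a prefix of `v`'s) and its maximal-reach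
pointer points into the subtree of `v`. -/
theorem positionHeap_search_correct
    {α : Type} [DecidableEq α]
    (S T : List α) (c : α) (hS : S = T ++ [c]) (hc : c ∉ T)
    (nodes : Finset (List α)) (lab : List α → ℕ) (nodeOf mrOf : ℕ → List α)
    (hpc : ∀ p ∈ nodes, ∀ q : List α, q <+: p → q ∈ nodes)
    (hbij : Set.BijOn lab ↑nodes (Set.Iic S.length))
    (hroot : ([] : List α) ∈ nodes ∧ lab [] = 0)
    (hheap : ∀ p ∈ nodes, ∀ q ∈ nodes, p <+: q → lab p ≤ lab q)
    (hpath : ∀ p ∈ nodes, 1 ≤ lab p → p <+: S.drop (lab p - 1))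
    (hnodeOf : ∀ i ≤ S.length, nodeOf i ∈ nodes ∧ lab (nodeOf i) = i)
    -- `mrOf i` is the maximal reach of the node labelled `i`: the deepest node
    -- whose path label is a prefix of `S[i..n]`
    (hmr : ∀ i : ℕ, 1 ≤ i → i ≤ S.length →
      mrOf i ∈ nodes ∧ mrOf i <+: S.drop (i - 1) ∧
      ∀ q ∈ nodes, q <+: S.drop (i - 1) → q.length ≤ (mrOf i).length)
    (P : List α) (m : ℕ) (hm : P.length = m)
    (v : List α) (hv : v ∈ nodes) (hvP : v <+: P) (hvm : v.length = m)
    (hvdeep : ∀ q ∈ nodes, q <+: P → q.length ≤ v.length) :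
    ∀ p : ℕ, 1 ≤ p → p ≤ S.length →
      (P <+: S.drop (p - 1) ↔
        (v <+: nodeOf p ∨ (nodeOf p <+: v ∧ v <+: mrOf p))) :=
  positionHeap_search_correct_general S nodes lab nodeOf mrOf hpath hnodeOf hmr P m hm v hv hvP hvm
end

section
/- If the deepest node v of the position heap whose path label is a prefix of pattern P has depth d < m = |P|, then every occurrence of P in S at position p satisfies: the node labelled p lies on the path from the root to v and its maximal-reach pointer points exactly to v; moreover P occurs at p if and only if P[1..d] occurs at p via such a node and P[d+1..m] occurs at p+d (recursing on the remainder). -/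
/-!
If `P` occurs at position `p`, every heap node that is a prefix of the suffix `S[p..]` is
comparable with `P`; it cannot extend `P`, since then `P` itself would be a node deeper than
`v` (node sets are prefix-closed). So node `p` lies on the root-to-`v` path, and the deepest
node below `S[p..]`, the maximal reach of `p`, is `v`. The equivalence is the splitting of a
prefix occurrence at `d`.
-/

namespace List

variable {α : Type*}

theorem prefix_iff_take_prefix_and_drop_prefix {P L : List α} (d : ℕ) :
    P <+: L ↔ P.take d <+: L ∧ P.drop d <+: L.drop d := by
  refine ⟨fun h => ⟨(take_prefix d P).trans h, h.drop d⟩, fun ⟨htake, hdrop⟩ => ?_⟩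
  rcases le_or_gt d P.length with hd | hd
  · have hL : L.take d = P.take d := by
      rw [prefix_iff_eq_take.mp htake, length_take_of_le hd]
    rw [← take_append_drop d P, ← take_append_drop d L, hL]
    exact prefix_append_right_inj _ |>.mpr hdrop
  · rwa [take_of_length_le hd.le] at htake

end List

section DeepestPrefix

variable {α : Type*} {nodes : Set (List α)} {v P L : List α}

theorem prefix_deepest_of_prefix_of_prefix
    (hpc : ∀ p ∈ nodes, ∀ q : List α, q <+: p → q ∈ nodes)
    (hvP : v <+: P) (hvdeep : ∀ q ∈ nodes, q <+: P → q.length ≤ v.length)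
    (hshort : v.length < P.length) (hPL : P <+: L)
    {q : List α} (hq : q ∈ nodes) (hqL : q <+: L) : q <+: v := by
  have hqP : q <+: P := by
    refine (List.prefix_or_prefix_of_prefix hqL hPL).resolve_right fun hPq => ?_
    exact absurd (hvdeep P (hpc q hq P hPq) List.prefix_rfl) (by omega)
  exact List.prefix_of_prefix_length_le hqP hvP (hvdeep q hq hqP)

theorem eq_deepest_of_prefix_of_prefix
    (hpc : ∀ p ∈ nodes, ∀ q : List α, q <+: p → q ∈ nodes)
    (hv : v ∈ nodes) (hvP : v <+: P) (hvdeep : ∀ q ∈ nodes, q <+: P → q.length ≤ v.length)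
    (hshort : v.length < P.length) (hPL : P <+: L)
    {w : List α} (hw : w ∈ nodes) (hwL : w <+: L)
    (hwmax : ∀ q ∈ nodes, q <+: L → q.length ≤ w.length) : w = v :=
  have hwv := prefix_deepest_of_prefix_of_prefix hpc hvP hvdeep hshort hPL hw hwL
  hwv.eq_of_length (le_antisymm hwv.length_le (hwmax v hv (hvP.trans hPL)))

end DeepestPrefix

theorem positionHeap_search_filter_step_general
    {α : Type}
    (S : List α)
    (nodes : Finset (List α)) (lab : List α → ℕ) (nodeOf mrOf : ℕ → List α)
    (hpc : ∀ p ∈ nodes, ∀ q : List α, q <+: p → q ∈ nodes)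
    (hpath : ∀ p ∈ nodes, 1 ≤ lab p → p <+: S.drop (lab p - 1))
    (hnodeOf : ∀ i ≤ S.length, nodeOf i ∈ nodes ∧ lab (nodeOf i) = i)
    (hmr : ∀ i : ℕ, 1 ≤ i → i ≤ S.length →
      mrOf i ∈ nodes ∧ mrOf i <+: S.drop (i - 1) ∧
      ∀ q ∈ nodes, q <+: S.drop (i - 1) → q.length ≤ (mrOf i).length)
    (P : List α) (m d : ℕ) (hm : P.length = m)
    (v : List α) (hv : v ∈ nodes) (hvP : v <+: P) (hvd : v.length = d)
    (hvdeep : ∀ q ∈ nodes, q <+: P → q.length ≤ v.length)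
    (hdm : d < m) :
    ∀ p : ℕ, 1 ≤ p → p ≤ S.length →
      (P <+: S.drop (p - 1) →
        nodeOf p <+: v ∧ mrOf p = v) ∧
      (P <+: S.drop (p - 1) ↔
        (nodeOf p <+: v ∧ mrOf p = v ∧ P.take d <+: S.drop (p - 1) ∧
          P.drop d <+: S.drop (p - 1 + d))) := by
  intro p hp1 hp2
  have hshort : v.length < P.length := by omega
  have filter : P <+: S.drop (p - 1) → nodeOf p <+: v ∧ mrOf p = v := by
    intro hP
    obtain ⟨hn, hlab⟩ := hnodeOf p hp2
    obtain ⟨hmrn, hmrS, hmrmax⟩ := hmr p hp1 hp2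
    have hnS : nodeOf p <+: S.drop (p - 1) := by
      simpa only [hlab] using hpath _ hn (by omega)
    exact ⟨prefix_deepest_of_prefix_of_prefix hpc hvP hvdeep hshort hP hn hnS,
      eq_deepest_of_prefix_of_prefix hpc hv hvP hvdeep hshort hP hmrn hmrS hmrmax⟩
  have hsplit := List.prefix_iff_take_prefix_and_drop_prefix (P := P) (L := S.drop (p - 1)) d
  rw [List.drop_drop] at hsplit
  refine ⟨filter, fun hP => ⟨filter hP |>.1, filter hP |>.2, hsplit.mp hP⟩, ?_⟩
  rintro ⟨-, -, hocc⟩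
  exact hsplit.mpr hocc

/-- In a position heap for `S`, suppose the deepest node `v`
whose path label is a prefix of the pattern `P` has depth `d < m = |P|`.
Then every occurrence of `P` in `S` at position `p` satisfies: the node
labelled `p` lies on the path from the root to `v` (its path label is a
prefix of `v`'s) and its maximal-reach pointer points exactly to `v`;
moreover, `P` occurs at `p` if and only if `P[1..d]` occurs at `p` via such a
node (node `p` on the root-to-`v` path with maximal reach `v`) and
`P[d+1..m]` occurs at position `p + d`. -/
theorem positionHeap_search_filter_step
    {α : Type} [DecidableEq α]
    (S T : List α) (c : α) (hS : S = T ++ [c]) (hc : c ∉ T)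
    (nodes : Finset (List α)) (lab : List α → ℕ) (nodeOf mrOf : ℕ → List α)
    (hpc : ∀ p ∈ nodes, ∀ q : List α, q <+: p → q ∈ nodes)
    (hbij : Set.BijOn lab ↑nodes (Set.Iic S.length))
    (hroot : ([] : List α) ∈ nodes ∧ lab [] = 0)
    (hheap : ∀ p ∈ nodes, ∀ q ∈ nodes, p <+: q → lab p ≤ lab q)
    (hpath : ∀ p ∈ nodes, 1 ≤ lab p → p <+: S.drop (lab p - 1))
    (hnodeOf : ∀ i ≤ S.length, nodeOf i ∈ nodes ∧ lab (nodeOf i) = i)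
    (hmr : ∀ i : ℕ, 1 ≤ i → i ≤ S.length →
      mrOf i ∈ nodes ∧ mrOf i <+: S.drop (i - 1) ∧
      ∀ q ∈ nodes, q <+: S.drop (i - 1) → q.length ≤ (mrOf i).length)
    (P : List α) (m d : ℕ) (hm : P.length = m)
    (v : List α) (hv : v ∈ nodes) (hvP : v <+: P) (hvd : v.length = d)
    (hvdeep : ∀ q ∈ nodes, q <+: P → q.length ≤ v.length)
    (hdm : d < m) :
    ∀ p : ℕ, 1 ≤ p → p ≤ S.length →
      (P <+: S.drop (p - 1) →
        nodeOf p <+: v ∧ mrOf p = v) ∧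
      (P <+: S.drop (p - 1) ↔
        (nodeOf p <+: v ∧ mrOf p = v ∧ P.take d <+: S.drop (p - 1) ∧
          P.drop d <+: S.drop (p - 1 + d))) :=
  positionHeap_search_filter_step_general S nodes lab nodeOf mrOf hpc hpath hnodeOf hmr P m d hm v
    hv hvP hvd hvdeep hdm
end

section
/- In the LZ78-style characterization: the position heap of S equals the trie obtained by the greedy parse in which, starting with a dictionary containing only the empty string, for i = 1,...,n one adds to the dictionary the shortest prefix of S[i..n] not already in the dictionary. The resulting dictionary is prefix-closed and has exactly n+1 elements (including the empty string), and each added string is a prefix of the corresponding suffix. -/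
/-- A prefix of `T ++ [c]` is a prefix of `T` or the whole list. -/
lemma prefix_snoc_cases {α : Type} {T p : List α} {c : α}
    (h : p <+: T ++ [c]) : p <+: T ∨ p = T ++ [c] := by
  rcases h with ⟨t, ht⟩
  rcases t.eq_nil_or_concat with rfl | ⟨t', d, rfl⟩
  · right; simpa using ht
  · left
    have : p ++ t' ++ [d] = T ++ [c] := by simpa using ht
    have h2 := List.append_inj' this (by simp)
    exact ⟨t', h2.1⟩

section main
variable {α : Type} [DecidableEq α]

lemma key_invariant (S T : List α) (c : α) (hS : S = T ++ [c]) (hc : c ∉ T) :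
    ∀ i, ∀ p ∈ posHeapBuild S i, ∀ j, i ≤ j → j < S.length → p ≠ S.drop j := by
  intro i
  induction i with
  | zero =>
    intro p hp j _ hj
    simp only [posHeapBuild, Finset.mem_singleton] at hp
    subst hp
    intro h
    have := congrArg List.length h
    simp at this
    omega
  | succ i ih =>
    intro p hp j hij hj
    simp only [posHeapBuild, posHeapStep] at hp
    have hin : i < S.length := by omega
    rcases hfind : ((S.drop i).inits).find? (fun p => decide (p ∉ posHeapBuild S i)) with
      _ | q
    · rw [hfind] at hp
      exact ih p hp j (by omega) hj
    · rw [hfind] at hp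
      rcases Finset.mem_insert.mp hp with rfl | hp
      · -- p = q, a prefix of S.drop i
        have hq : p <+: S.drop i := by
          have := List.mem_of_find?_eq_some hfind
          exact (List.mem_inits _ _).mp this
        intro heq
        -- S.drop j ends with c, so p contains c, so p = S.drop i, lengths differ
        have hiT : i ≤ T.length := by
          have : S.length = T.length + 1 := by simp [hS]
          omega
        have hjT : j ≤ T.length := by
          have : S.length = T.length + 1 := by simp [hS]
          omega
        have hdropi : S.drop i = T.drop i ++ [c] := by
          rw [hS, List.drop_append_of_le_length hiT]
        have hdropj : S.drop j = T.drop j ++ [c] := by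
          rw [hS, List.drop_append_of_le_length hjT]
        rw [hdropi] at hq
        rcases prefix_snoc_cases hq with hpT | hpfull
        · -- p <+: T.drop i, but p = S.drop j contains c
          have hcp : c ∈ p := by rw [heq, hdropj]; simp
          exact hc (List.mem_of_mem_drop (hpT.subset hcp))
        · -- p = S.drop i, but p = S.drop j, lengths differ
          have h1 : p.length = T.length + 1 - i := by
            rw [hpfull]; simp; omega
          have h2 : p.length = T.length + 1 - j := by
            rw [heq, hdropj]; simp; omega
          omega
      · exact ih p hp j (by omega) hj

/-- LZ78-style characterization: for `S[1..n]` with a unique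
terminator, in the greedy parse that for `i = 1, ..., n` adds to the
dictionary (initially `{ε}`) the shortest prefix of `S[i..n]` not already in
it, every step succeeds and each added string is a prefix of the corresponding
suffix; the resulting dictionary — the position heap of `S` — is prefix-closed
and has exactly `n + 1` elements (including the empty string). -/
theorem posHeapBuild_LZ78_characterization
    {α : Type} [DecidableEq α]
    (S T : List α) (c : α) (hS : S = T ++ [c]) (hc : c ∉ T) :
    (∀ i < S.length, ∃ p : List α,
        ((S.drop i).inits).find? (fun p => decide (p ∉ posHeapBuild S i)) = some p ∧
        p <+: S.drop i) ∧
    (∀ p ∈ posHeapBuild S S.length, ∀ q : List α, q <+: p →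
      q ∈ posHeapBuild S S.length) ∧
    (posHeapBuild S S.length).card = S.length + 1 := by
  have key := key_invariant S T c hS hc
  -- every step succeeds
  have hsucc : ∀ i < S.length, ∃ p : List α,
      ((S.drop i).inits).find? (fun p => decide (p ∉ posHeapBuild S i)) = some p ∧
      p <+: S.drop i := by
    intro i hi
    have hmem : (S.drop i) ∈ (S.drop i).inits := (List.mem_inits _ _).mpr List.prefix_rfl
    have hnot : S.drop i ∉ posHeapBuild S i := fun h => key i _ h i le_rfl hi rfl
    have : ∃ x ∈ (S.drop i).inits, (fun p => decide (p ∉ posHeapBuild S i)) x := by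
      exact ⟨S.drop i, hmem, by simpa using hnot⟩
    rcases Option.isSome_iff_exists.mp (List.find?_isSome.mpr this) with ⟨p, hp⟩
    exact ⟨p, hp, (List.mem_inits _ _).mp (List.mem_of_find?_eq_some hp)⟩
  refine ⟨hsucc, ?_, ?_⟩
  · -- prefix closed; prove by induction for all i
    have hclosed : ∀ i, ∀ p ∈ posHeapBuild S i, ∀ q : List α, q <+: p →
        q ∈ posHeapBuild S i := by
      intro i
      induction i with
      | zero =>
        intro p hp q hq
        simp only [posHeapBuild, Finset.mem_singleton] at hp ⊢
        subst hp
        exact List.prefix_nil.mp hq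
      | succ i ih =>
        intro p hp q hq
        simp only [posHeapBuild, posHeapStep] at hp ⊢
        rcases hfind : ((S.drop i).inits).find? (fun p => decide (p ∉ posHeapBuild S i)) with
          _ | r
        · rw [hfind] at hp; exact ih p hp q hq
        · rw [hfind] at hp
          rcases Finset.mem_insert.mp hp with rfl | hp
          · by_cases hqp : q = p
            · subst hqp; exact Finset.mem_insert_self _ _
            · -- q is a proper prefix of p; find? ordering shows q ∈ N
              rw [List.find?_eq_some_iff_getElem] at hfind
              obtain ⟨-, k, hk, hget, hbefore⟩ := hfind
              rw [List.getElem_inits] at hget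
              have hklen : k ≤ (S.drop i).length := by
                have := hk; rw [List.length_inits] at this; omega
              have hplen : p.length = k := by
                rw [← hget, List.length_take]; omega
              have hqlen : q.length < k := by
                have hle := hq.length_le
                rcases Nat.lt_or_ge q.length p.length with h | h
                · omega
                · exact absurd (hq.eq_of_length (le_antisymm hle h)) hqp
              have hqtake : q = (S.drop i).take q.length :=
                List.prefix_iff_eq_take.mp (hq.trans (hget ▸ List.take_prefix k _))
              have := hbefore q.length (by omega)
              rw [List.getElem_inits] at this
              simp only [Bool.not_eq_true', decide_eq_false_iff_not, not_not] at this
              rw [hqtake]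
              exact Finset.mem_insert_of_mem this
          · exact Finset.mem_insert_of_mem (ih p hp q hq)
    exact hclosed S.length
  · -- cardinality
    have hcard : ∀ i ≤ S.length, (posHeapBuild S i).card = i + 1 := by
      intro i
      induction i with
      | zero => intro _; simp [posHeapBuild]
      | succ i ih =>
        intro hi
        obtain ⟨p, hp, -⟩ := hsucc i (by omega)
        have hnp : p ∉ posHeapBuild S i := by
          have := List.find?_some hp
          simpa using this
        simp only [posHeapBuild, posHeapStep, hp]
        rw [Finset.card_insert_of_notMem hnp, ih (by omega)]
    exact hcard S.length le_rfl
end main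
end
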